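/- arXiv:1101.0112 — 3 statements merged into one kernel-verified Lean document; each statement's English description precedes it below -/
import Mathlib

section
/- Let P and Q be partial multivalued functions on Baire space. If P ⊕ Q has a choice function that is continuous on dom(P ⊕ Q), then P has a choice function continuous on dom(P), or Q has a choice function continuous on dom(Q). (Hence the identity is meet-irreducible in the continuous Weihrauch lattice.) -/
namespace Weihrauch

/-- Baire space ℕ^ℕ. -/
abbrev Baire : Type := ℕ → ℕ

/-- The interleaving pairing homeomorphism ⟨p,q⟩. -/
def pair (p q : Baire) : Baire := fun n => if n % 2 = 0 then p (n / 2) else q (n / 2)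

/-- First component of the interleaving pairing. -/
def left (z : Baire) : Baire := fun n => z (2 * n)

/-- Second component of the interleaving pairing. -/
def right (z : Baire) : Baire := fun n => z (2 * n + 1)

/-- The sequence np = n,p(0),p(1),… . -/
def cons (n : ℕ) (p : Baire) : Baire := fun m => match m with
  | 0 => n
  | k + 1 => p k

/-- Drop the first entry of a sequence. -/
def tail (z : Baire) : Baire := fun n => z (n + 1)

/-- The constant zero sequence 0^ℕ. -/
def zero : Baire := fun _ => 0

/-- The constant one sequence 1^ℕ. -/
def one : Baire := fun _ => 1

/-- Partial multivalued functions on Baire space. -/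
abbrev MV : Type := Baire → Set Baire

/-- The domain of a partial multivalued function. -/
def dom (P : MV) : Set Baire := {x | (P x).Nonempty}

/-- Continuous Weihrauch reducibility P ≤ᶜ_W Q. -/
def CWle (P Q : MV) : Prop :=
  ∃ H K : Baire → Baire,
    ContinuousOn K (dom P) ∧
    (∀ x ∈ dom P, K x ∈ dom Q) ∧
    ContinuousOn H {z | ∃ x ∈ dom P, ∃ y ∈ Q (K x), z = pair x y} ∧
    (∀ x ∈ dom P, ∀ y ∈ Q (K x), H (pair x y) ∈ P x)

/-- Continuous Weihrauch equivalence P ≡ᶜ_W Q. -/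
def CWequiv (P Q : MV) : Prop := CWle P Q ∧ CWle Q P

/-- The infimum operation (P ⊕ Q)(⟨p,q⟩) = 0P(p) ∪ 1Q(q) for p ∈ dom P, q ∈ dom Q. -/
def oplus (P Q : MV) : MV := fun z =>
  {r | left z ∈ dom P ∧ right z ∈ dom Q ∧
       ((∃ s ∈ P (left z), r = cons 0 s) ∨ (∃ s ∈ Q (right z), r = cons 1 s))}

/-- The coproduct (P ∐ Q)(0p) = 0P(p), (P ∐ Q)(1p) = 1Q(p). -/
def coprod (P Q : MV) : MV := fun z =>
  {r | (z 0 = 0 ∧ ∃ s ∈ P (tail z), r = cons 0 s) ∨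
       (z 0 = 1 ∧ ∃ s ∈ Q (tail z), r = cons 1 s)}

/-- The product (P × Q)(⟨p,q⟩) = {⟨r,s⟩ | r ∈ P(p), s ∈ Q(q)}. -/
def prod (P Q : MV) : MV := fun z =>
  {r | ∃ s ∈ P (left z), ∃ t ∈ Q (right z), r = pair s t}

/-- A fixed finite tupling ⟨p₀,…,p_{n-1}⟩ of n sequences, by interleaving. -/
def ftup (n : ℕ) (f : ℕ → Baire) : Baire := fun m => f (m % n) (m / n)

/-- The i-th projection inverting `ftup n`: `fproj n i (ftup n f) = f i` for i < n. -/
def fproj (n i : ℕ) (z : Baire) : Baire := fun j => z (j * n + i)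

/-- The finite parallelization P*, with P*(n⟨p₁,…,pₙ⟩) = {n⟨r₁,…,rₙ⟩ | rᵢ ∈ P(pᵢ)}
for n ≥ 1 and P*(0p) = {0^ℕ}.  (Note every sequence is of the form `ftup n f`,
since `ftup n (fun i => fproj n i z) = z`.) -/
def fpar (P : MV) : MV := fun z =>
  {r | (z 0 = 0 ∧ r = zero) ∨
       (1 ≤ z 0 ∧ r 0 = z 0 ∧
        ∀ i < z 0, fproj (z 0) i (tail r) ∈ P (fproj (z 0) i (tail z)))}

/-- Countable tupling ⟨p₁,p₂,…⟩ via the pairing bijection ℕ×ℕ→ℕ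
(the family is indexed by 0,1,2,…). -/
def ctup (f : ℕ → Baire) : Baire := fun m => f (Nat.unpair m).1 (Nat.unpair m).2

/-- Projection inverting `ctup`: `cproj i (ctup f) = f i`. -/
def cproj (i : ℕ) (z : Baire) : Baire := fun j => z (Nat.pair i j)

/-- The 1-indexed component pᵢ of a countable tuple z = ⟨p₁,p₂,…⟩ (for i ≥ 1). -/
def comp (z : Baire) (i : ℕ) : Baire := cproj (i - 1) z

/-- LLPO_{n,1}: at most one pair (i,j) with pᵢ(j) ≠ 0 in the domain;
values are the i0^ℕ with 1 ≤ i ≤ n and pᵢ = 0^ℕ. -/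
def LLPOn (n : ℕ) : MV := fun z =>
  {r | (∀ i j i' j', 1 ≤ i → 1 ≤ i' → comp z i j ≠ 0 → comp z i' j' ≠ 0 →
          (i = i' ∧ j = j')) ∧
       ∃ i, 1 ≤ i ∧ i ≤ n ∧ comp z i = zero ∧ r = cons i zero}

/-- LLPO_{∞,m}: at most m pairs (i,j) with pᵢ(j) ≠ 0 in the domain;
values are the i0^ℕ with pᵢ = 0^ℕ. -/
def LLPOinf (m : ℕ) : MV := fun z =>
  {r | (∃ s : Finset (ℕ × ℕ), s.card ≤ m ∧ ∀ i j, 1 ≤ i → comp z i j ≠ 0 → (i, j) ∈ s) ∧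
       ∃ i, 1 ≤ i ∧ comp z i = zero ∧ r = cons i zero}

/-- The sequence 0ⁿ10^ℕ. -/
def zeros1 (n : ℕ) : Baire := fun m => if m = n then 1 else 0

/-- Σ_k^∞LLPO(⟨0^ℕ,p⟩) = LLPO_{∞,2}(p), Σ_k^∞LLPO(⟨0ⁿ10^ℕ,p⟩) = LLPO_{n,1}(p) for n ≥ k. -/
def SigmaLLPO (k : ℕ) : MV := fun z =>
  {r | (left z = zero ∧ r ∈ LLPOinf 2 (right z)) ∨
       (∃ n, k ≤ n ∧ left z = zeros1 n ∧ r ∈ LLPOn n (right z))}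

/-- c_𝒜, with dom(c_𝒜) = {0^ℕ} and c_𝒜(0^ℕ) = 𝒜. -/
def cA (A : Set Baire) : MV := fun z => {r | z = zero ∧ r ∈ A}

/-- d_𝒜, with dom(d_𝒜) = 𝒜 and d_𝒜(x) = {1^ℕ} for x ∈ 𝒜. -/
def dA (A : Set Baire) : MV := fun z => {r | z ∈ A ∧ r = one}

/-- Continuous Medvedev reducibility 𝒜 ≤ᶜ_M 𝒝. -/
def CMle (A B : Set Baire) : Prop :=
  ∃ H : Baire → Baire, ContinuousOn H B ∧ ∀ x ∈ B, H x ∈ A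

/-- The Medvedev sum 𝒜 + 𝒝 = 0𝒜 ∪ 1𝒝. -/
def msum (A B : Set Baire) : Set Baire := (cons 0 '' A) ∪ (cons 1 '' B)

/-- The Medvedev product 𝒜 × 𝒝 = {⟨p,q⟩ | p ∈ 𝒜, q ∈ 𝒝}. -/
def mprod (A B : Set Baire) : Set Baire := {z | ∃ p ∈ A, ∃ q ∈ B, z = pair p q}

end Weihrauch

namespace OplusAux

open Weihrauch

attribute [local instance] Classical.propDecidable

lemma left_pair (p q : Baire) : left (pair p q) = p := by
  funext n; simp [left, pair, Nat.mul_div_cancel_left]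

lemma right_pair (p q : Baire) : right (pair p q) = q := by
  funext n
  have h1 : (2 * n + 1) % 2 = 1 := by omega
  have h2 : (2 * n + 1) / 2 = n := by omega
  simp [right, pair, h1, h2]

lemma tail_cons (b : ℕ) (s : Baire) : tail (cons b s) = s := by funext n; rfl

lemma continuous_tail : Continuous tail := continuous_pi fun n => continuous_apply (n + 1)

lemma continuous_pairl (p : Baire) : Continuous (fun q => pair p q) := by
  refine continuous_pi fun n => ?_
  by_cases h : n % 2 = 0 <;> simp only [pair, h, if_true, if_false]
  · exact continuous_const
  · exact continuous_apply _

lemma continuous_pairr (q : Baire) : Continuous (fun p => pair p q) := by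
  refine continuous_pi fun n => ?_
  by_cases h : n % 2 = 0 <;> simp only [pair, h, if_true, if_false]
  · exact continuous_apply _
  · exact continuous_const

lemma exists_cyl {z : Baire} {U : Set Baire} (hU : U ∈ nhds z) :
    ∃ n, ∀ z' : Baire, (∀ i < n, z' i = z i) → z' ∈ U := by
  obtain ⟨V, hVU, hVo, hzV⟩ := mem_nhds_iff.1 hU
  obtain ⟨s, ⟨x, n, rfl⟩, hzs, hsV⟩ :=
    (PiNat.isTopologicalBasis_cylinders (fun _ : ℕ => ℕ)).exists_subset_of_mem_open hzV hVo
  refine ⟨n, fun z' hz' => hVU (hsV ?_)⟩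
  intro i hi
  rw [hz' i hi]; exact hzs i hi

variable (P Q : MV) (f : Baire → Baire)

lemma mem_dom_oplus {P Q : MV} {p q : Baire} (hp : p ∈ dom P) (hq : q ∈ dom Q) :
    pair p q ∈ dom (oplus P Q) := by
  obtain ⟨s, hs⟩ := hp
  refine ⟨cons 0 s, ?_, ?_, Or.inl ⟨s, ?_, rfl⟩⟩
  · rw [left_pair]; exact ⟨s, hs⟩
  · rw [right_pair]; exact hq
  · rw [left_pair]; exact hs

/-- The value of the choice function at `pair p q` solves `Q q` if its head is `1`,
and solves `P p` otherwise. -/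
lemma solve {P Q : MV} {f : Baire → Baire}
    (hf : ∀ x ∈ dom (oplus P Q), f x ∈ oplus P Q x) {p q : Baire}
    (hp : p ∈ dom P) (hq : q ∈ dom Q) :
    (f (pair p q) 0 = 1 ∧ tail (f (pair p q)) ∈ Q q) ∨
    (f (pair p q) 0 ≠ 1 ∧ tail (f (pair p q)) ∈ P p) := by
  obtain ⟨-, -, hd⟩ := hf _ (mem_dom_oplus hp hq)
  rcases hd with ⟨s, hs, he⟩ | ⟨s, hs, he⟩
  · right
    rw [left_pair] at hs
    rw [he, tail_cons]
    exact ⟨by simp [cons], hs⟩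
  · left
    rw [right_pair] at hs
    rw [he, tail_cons]
    exact ⟨rfl, hs⟩

/-- `p` solves the `Q`-side on the whole cylinder of length `n` around (any sequence
truncating to) `σ`. -/
def Good (n : ℕ) (σ p : Baire) : Prop :=
  p ∈ dom P ∧ ∀ q' ∈ dom Q, (∀ i < n, q' i = σ i) → f (pair p q') 0 = 1

/-- Canonical truncation of a sequence. -/
def trunc (n : ℕ) (q : Baire) : Baire := fun i => if i < n then q i else 0

lemma trunc_congr {n : ℕ} {q q' : Baire} (h : ∀ i < n, q' i = q i) :
    trunc n q' = trunc n q := by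
  funext i
  by_cases hi : i < n <;> simp [trunc, hi]
  exact h i hi

noncomputable def NN (q : Baire) : ℕ :=
  if h : ∃ n, ∃ p, Good P Q f n (trunc n q) p then Nat.find h else 0

noncomputable def pick (n : ℕ) (σ : Baire) : Baire :=
  if h : ∃ p, Good P Q f n σ p then Classical.choose h else zero

noncomputable def gfun (q : Baire) : Baire :=
  tail (f (pair (pick P Q f (NN P Q f q) (trunc (NN P Q f q) q)) q))

lemma NN_spec {q : Baire} (h : ∃ n, ∃ p, Good P Q f n (trunc n q) p) :
    (∃ p, Good P Q f (NN P Q f q) (trunc (NN P Q f q) q) p) ∧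
    ∀ m < NN P Q f q, ¬∃ p, Good P Q f m (trunc m q) p := by
  rw [NN, dif_pos h]
  exact ⟨Nat.find_spec h, fun m hm => Nat.find_min h hm⟩

lemma pick_spec {n : ℕ} {σ : Baire} (h : ∃ p, Good P Q f n σ p) :
    Good P Q f n σ (pick P Q f n σ) := by
  rw [pick, dif_pos h]
  exact Classical.choose_spec h

/-- Local constancy of `NN` on a cylinder of its own length. -/
lemma NN_congr {q q' : Baire}
    (h : ∃ n, ∃ p, Good P Q f n (trunc n q) p)
    (h' : ∃ n, ∃ p, Good P Q f n (trunc n q') p)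
    (hag : ∀ i < NN P Q f q, q' i = q i) :
    NN P Q f q' = NN P Q f q := by
  obtain ⟨hsp, hmin⟩ := NN_spec P Q f h
  obtain ⟨hsp', hmin'⟩ := NN_spec P Q f h'
  have hle : NN P Q f q' ≤ NN P Q f q := by
    by_contra hlt
    push_neg at hlt
    refine hmin' _ hlt ?_
    rwa [trunc_congr hag]
  rcases lt_or_eq_of_le hle with hlt | heq
  · exfalso
    refine hmin _ hlt ?_
    rw [← trunc_congr (fun i hi => hag i (hi.trans hlt))]
    exact hsp'
  · exact heq

/-- Existence of a good cylinder-witness pair for every `q ∈ dom Q`, in the case where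
a `Q`-solving input exists above every `q`. -/
lemma exists_good (hfc : ContinuousOn f (dom (oplus P Q)))
    (hcase : ∀ q ∈ dom Q, ∃ p ∈ dom P, f (pair p q) 0 = 1)
    {q : Baire} (hq : q ∈ dom Q) :
    ∃ n, ∃ p, Good P Q f n (trunc n q) p := by
  obtain ⟨p, hp, h1⟩ := hcase q hq
  have hz : pair p q ∈ dom (oplus P Q) := mem_dom_oplus hp hq
  have hVo : IsOpen {w : Baire | w 0 = 1} := by
    have : ({w : Baire | w 0 = 1} : Set Baire) = (fun w : Baire => w 0) ⁻¹' {1} := rfl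
    rw [this]
    exact (continuous_apply 0).isOpen_preimage _ (isOpen_discrete _)
  have hmem : f ⁻¹' {w : Baire | w 0 = 1} ∈ nhdsWithin (pair p q) (dom (oplus P Q)) :=
    hfc _ hz (hVo.mem_nhds h1)
  obtain ⟨U, hUo, hzU, hUsub⟩ := mem_nhdsWithin.1 hmem
  obtain ⟨m, hm⟩ := exists_cyl (hUo.mem_nhds hzU)
  refine ⟨m, p, hp, fun q' hq' hag => ?_⟩
  have hag' : ∀ i < m, q' i = q i := by
    intro i hi
    rw [hag i hi]
    simp [trunc, hi]
  have hin : pair p q' ∈ U := by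
    refine hm _ fun j hj => ?_
    by_cases hjp : j % 2 = 0 <;> simp only [pair, hjp, if_true, if_false]
    exact hag' _ (lt_of_le_of_lt (Nat.div_le_self j 2) hj)
  exact hUsub ⟨hin, mem_dom_oplus hp hq'⟩

end OplusAux


open Weihrauch

/-- If P ⊕ Q has a choice function continuous on its domain, then P or Q has a
choice function continuous on its domain (meet-irreducibility of the identity in
the continuous Weihrauch lattice). -/
theorem oplus_continuous_choice (P Q : MV)
    (h : ∃ f : Baire → Baire, ContinuousOn f (dom (oplus P Q)) ∧
          ∀ x ∈ dom (oplus P Q), f x ∈ oplus P Q x) :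
    (∃ f : Baire → Baire, ContinuousOn f (dom P) ∧ ∀ x ∈ dom P, f x ∈ P x) ∨
    (∃ g : Baire → Baire, ContinuousOn g (dom Q) ∧ ∀ x ∈ dom Q, g x ∈ Q x) := by
  classical
  obtain ⟨f, hfc, hf⟩ := h
  by_cases hcase : ∃ q₁ ∈ dom Q, ∀ p ∈ dom P, f (pair p q₁) 0 ≠ 1
  · -- P has a continuous choice function
    left
    obtain ⟨q₁, hq₁, hall⟩ := hcase
    refine ⟨fun p => tail (f (pair p q₁)), ?_, ?_⟩
    · intro p hp
      have h1 : ContinuousWithinAt (fun p' : Baire => pair p' q₁) (dom P) p :=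
        (OplusAux.continuous_pairr q₁).continuousWithinAt
      have h2 : ContinuousWithinAt (fun p' => f (pair p' q₁)) (dom P) p :=
        ContinuousWithinAt.comp (g := f) (f := fun p' : Baire => pair p' q₁)
          (hfc _ (OplusAux.mem_dom_oplus hp hq₁)) h1
          (fun p' hp' => OplusAux.mem_dom_oplus hp' hq₁)
      exact OplusAux.continuous_tail.continuousAt.comp_continuousWithinAt h2
    · intro p hp
      rcases OplusAux.solve hf hp hq₁ with ⟨h1, -⟩ | ⟨-, h2⟩
      · exact absurd h1 (hall p hp)
      · exact h2
  · -- Q has a continuous choice function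
    right
    push_neg at hcase
    refine ⟨OplusAux.gfun P Q f, ?_, ?_⟩
    · intro q hq
      have hex := OplusAux.exists_good P Q f hfc hcase hq
      set n := OplusAux.NN P Q f q with hn
      obtain ⟨hsp, -⟩ := OplusAux.NN_spec P Q f hex
      have hgood := OplusAux.pick_spec P Q f hsp
      set p := OplusAux.pick P Q f n (OplusAux.trunc n q) with hpdef
      have hp : p ∈ dom P := hgood.1
      -- the fixed-`p` comparison function is continuous within `dom Q` at `q`
      have hcw : ContinuousWithinAt (fun q' => tail (f (pair p q'))) (dom Q) q := by
        have h1 : ContinuousWithinAt (fun q' : Baire => pair p q') (dom Q) q :=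
          (OplusAux.continuous_pairl p).continuousWithinAt
        have h2 : ContinuousWithinAt (fun q' => f (pair p q')) (dom Q) q :=
          ContinuousWithinAt.comp (g := f) (f := fun q' : Baire => pair p q')
            (hfc _ (OplusAux.mem_dom_oplus hp hq)) h1
            (fun q' hq' => OplusAux.mem_dom_oplus hp hq')
        exact OplusAux.continuous_tail.continuousAt.comp_continuousWithinAt h2
      -- `gfun` agrees with it on a cylinder around `q`
      have hCo : IsOpen {q' : Baire | ∀ i < n, q' i = q i} := by
        have : {q' : Baire | ∀ i < n, q' i = q i} =
            ⋂ i ∈ Finset.range n, (fun q' : Baire => q' i) ⁻¹' {q i} := by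
          ext q'; simp [Finset.mem_range]
        rw [this]
        exact isOpen_biInter_finset fun i _ =>
          (continuous_apply i).isOpen_preimage _ (isOpen_discrete _)
      have hqC : q ∈ {q' : Baire | ∀ i < n, q' i = q i} := fun i _ => rfl
      have heq : ∀ q' ∈ {q' : Baire | ∀ i < n, q' i = q i} ∩ dom Q,
          OplusAux.gfun P Q f q' = tail (f (pair p q')) := by
        rintro q' ⟨hq'C, hq'⟩
        have hex' := OplusAux.exists_good P Q f hfc hcase hq'
        have hNN : OplusAux.NN P Q f q' = n := OplusAux.NN_congr P Q f hex hex' hq'C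
        rw [OplusAux.gfun, hNN, OplusAux.trunc_congr hq'C, ← hpdef]
      refine hcw.congr_of_eventuallyEq ?_ (heq q ⟨hqC, hq⟩)
      filter_upwards [mem_nhdsWithin_of_mem_nhds (hCo.mem_nhds hqC),
        self_mem_nhdsWithin] with q' hq'C hq'
      exact heq q' ⟨hq'C, hq'⟩
    · intro q hq
      have hex := OplusAux.exists_good P Q f hfc hcase hq
      obtain ⟨hsp, -⟩ := OplusAux.NN_spec P Q f hex
      have hgood := OplusAux.pick_spec P Q f hsp
      have h1 : f (pair (OplusAux.pick P Q f (OplusAux.NN P Q f q)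
          (OplusAux.trunc (OplusAux.NN P Q f q) q)) q) 0 = 1 := by
        refine hgood.2 q hq fun i hi => ?_
        simp [OplusAux.trunc, hi]
      rcases OplusAux.solve hf hgood.1 hq with ⟨-, h2⟩ | ⟨hne, -⟩
      · exact h2
      · exact absurd h1 hne
end

section
/- For every k ≥ 2, LLPO_{k,1} is not continuously Weihrauch reducible to Σ_{k+1}^∞LLPO, i.e., LLPO_{k,1} ≰ᶜ_W Σ_{k+1}^∞LLPO. -/
section Aux

open Filter Topology

namespace Weihrauch

/-- The input with a single 1, in component `a` (1-indexed) at position `j`. -/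
def pert (a j : ℕ) : Baire := fun m => if m = Nat.pair (a-1) j then 1 else 0

lemma left_apply (z : Baire) (t : ℕ) : left z t = z (2*t) := rfl
lemma comp_right_apply (w : Baire) (i q : ℕ) :
    comp (right w) i q = w (2 * Nat.pair (i-1) q + 1) := rfl
lemma comp_zero (i : ℕ) : comp zero i = zero := rfl

lemma mem_LLPOn {n : ℕ} {z r : Baire} : r ∈ LLPOn n z ↔
    (∀ i j i' j', 1 ≤ i → 1 ≤ i' → comp z i j ≠ 0 → comp z i' j' ≠ 0 → (i = i' ∧ j = j')) ∧
    ∃ i, 1 ≤ i ∧ i ≤ n ∧ comp z i = zero ∧ r = cons i zero := Iff.rfl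

lemma mem_LLPOinf {m : ℕ} {z r : Baire} : r ∈ LLPOinf m z ↔
    (∃ s : Finset (ℕ × ℕ), s.card ≤ m ∧ ∀ i j, 1 ≤ i → comp z i j ≠ 0 → (i, j) ∈ s) ∧
    ∃ i, 1 ≤ i ∧ comp z i = zero ∧ r = cons i zero := Iff.rfl

lemma mem_Sigma {k' : ℕ} {z r : Baire} : r ∈ SigmaLLPO k' z ↔
    (left z = zero ∧ r ∈ LLPOinf 2 (right z)) ∨
    (∃ n, k' ≤ n ∧ left z = zeros1 n ∧ r ∈ LLPOn n (right z)) := Iff.rfl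

lemma zero_mem_dom (k : ℕ) (hk : 1 ≤ k) : zero ∈ dom (LLPOn k) := by
  refine ⟨cons 1 zero, mem_LLPOn.2 ⟨?_, 1, le_refl 1, hk, rfl, rfl⟩⟩
  intro i j i' j' _ _ h _
  exact absurd rfl h

lemma pert_lt {a j m : ℕ} (h : m < j) : pert a j m = 0 := by
  have := Nat.right_le_pair (a-1) j
  exact if_neg (by omega)

lemma comp_pert_ne {a i : ℕ} (ha : 1 ≤ a) (hi : 1 ≤ i) (hne : i ≠ a) (j : ℕ) :
    comp (pert a j) i = zero := by
  funext q
  refine if_neg (fun hc => hne ?_)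
  have := (Nat.pair_eq_pair.1 hc).1
  omega

lemma comp_pert_self (a j : ℕ) : comp (pert a j) a j = 1 := if_pos rfl

lemma pert_mem_dom (k a : ℕ) (hk : 2 ≤ k) (ha : 1 ≤ a) (j : ℕ) :
    pert a j ∈ dom (LLPOn k) := by
  refine ⟨cons (if a = 1 then 2 else 1) zero, mem_LLPOn.2 ⟨?_, ?_⟩⟩
  · intro i q i' q' hi hi' h h'
    have h1 : Nat.pair (i-1) q = Nat.pair (a-1) j := by
      by_contra hc; exact h (if_neg hc)
    have h2 : Nat.pair (i'-1) q' = Nat.pair (a-1) j := by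
      by_contra hc; exact h' (if_neg hc)
    have e1 := Nat.pair_eq_pair.1 h1
    have e2 := Nat.pair_eq_pair.1 h2
    exact ⟨by omega, by omega⟩
  · refine ⟨if a = 1 then 2 else 1, ?_, ?_, comp_pert_ne ha ?_ ?_ j, rfl⟩ <;>
      split_ifs <;> omega

lemma pert_pair_eq (a j : ℕ) (y : Baire) {m : ℕ} (hm : m < 2*j) :
    pair (pert a j) y m = pair zero y m := by
  unfold pair
  split_ifs with h
  · exact pert_lt (by have := Nat.right_le_pair (a-1) j; omega)
  · rfl

/-- From the uniqueness predicate and one nonzero witness, every other component is zero. -/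
lemma D1_other {z : Baire}
    (hpred : ∀ i j i' j', 1 ≤ i → 1 ≤ i' → comp z i j ≠ 0 → comp z i' j' ≠ 0 → (i = i' ∧ j = j'))
    {i₁ q₁ : ℕ} (hi₁ : 1 ≤ i₁) (hw : comp z i₁ q₁ ≠ 0)
    {i : ℕ} (hi : 1 ≤ i) (hne : i ≠ i₁) : comp z i = zero := by
  funext q
  by_contra h
  exact hne (hpred i q i₁ q₁ hi hi₁ h hw).1

/-- From the uniqueness predicate: some single index covers all nonzero components. -/
lemma D1_cover {z : Baire}
    (hpred : ∀ i j i' j', 1 ≤ i → 1 ≤ i' → comp z i j ≠ 0 → comp z i' j' ≠ 0 → (i = i' ∧ j = j')) :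
    ∃ u, ∀ i, 1 ≤ i → i ≠ u → comp z i = zero := by
  by_cases hw : ∃ i q, 1 ≤ i ∧ comp z i q ≠ 0
  · obtain ⟨i₁, q₁, hi₁, h₁⟩ := hw
    exact ⟨i₁, fun i hi hne => D1_other hpred hi₁ h₁ hi hne⟩
  · push_neg at hw
    exact ⟨0, fun i hi _ => funext fun q => hw i q hi⟩

lemma exists_two_cover (s : Finset (ℕ × ℕ)) (h : s.card ≤ 2) :
    ∃ u v, ∀ p ∈ s, p = u ∨ p = v := by
  rcases s.eq_empty_or_nonempty with rfl | ⟨b, hb⟩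
  · exact ⟨(0,0), (0,0), by simp⟩
  rcases (s.erase b).eq_empty_or_nonempty with he | ⟨c, hc⟩
  · refine ⟨b, b, fun p hp => Or.inl ?_⟩
    by_contra hpb
    have : p ∈ s.erase b := Finset.mem_erase.2 ⟨hpb, hp⟩
    simp [he] at this
  · have hcb : c ≠ b := (Finset.mem_erase.1 hc).1
    have hcs : c ∈ s := (Finset.mem_erase.1 hc).2
    refine ⟨b, c, fun p hp => ?_⟩
    by_contra hpc
    push_neg at hpc
    have h3 : 2 < s.card :=
      Finset.two_lt_card_iff.2 ⟨p, b, c, hp, hb, hcs, hpc.1, hpc.2, fun e => hcb e.symm⟩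
    omega

/-- From the finset condition: two indices cover all nonzero components. -/
lemma D2_cover {z : Baire}
    (h : ∃ s : Finset (ℕ × ℕ), s.card ≤ 2 ∧ ∀ i j, 1 ≤ i → comp z i j ≠ 0 → (i, j) ∈ s) :
    ∃ u v, ∀ i, 1 ≤ i → i ≠ u → i ≠ v → comp z i = zero := by
  obtain ⟨s, hs2, hcov⟩ := h
  obtain ⟨u, v, huv⟩ := exists_two_cover s hs2
  refine ⟨u.1, v.1, fun i hi hu hv => funext fun q => ?_⟩
  by_contra hq
  rcases huv _ (hcov i q hi hq) with h' | h'
  · exact hu (congrArg Prod.fst h')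
  · exact hv (congrArg Prod.fst h')

/-- With one nonzero witness, at most one further index can have a nonzero component. -/
lemma D2_cover₁ {z : Baire}
    (h : ∃ s : Finset (ℕ × ℕ), s.card ≤ 2 ∧ ∀ i j, 1 ≤ i → comp z i j ≠ 0 → (i, j) ∈ s)
    {i₁ q₁ : ℕ} (hi₁ : 1 ≤ i₁) (hw : comp z i₁ q₁ ≠ 0) :
    ∃ u, ∀ i, 1 ≤ i → i ≠ i₁ → i ≠ u → comp z i = zero := by
  obtain ⟨s, hs2, hcov⟩ := h
  obtain ⟨u, v, huv⟩ := exists_two_cover s hs2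
  rcases huv _ (hcov i₁ q₁ hi₁ hw) with h' | h'
  · refine ⟨v.1, fun i hi hne hv => funext fun q => ?_⟩
    by_contra hq
    rcases huv _ (hcov i q hi hq) with h'' | h''
    · exact hne (by rw [← h'] at h''; exact congrArg Prod.fst h'')
    · exact hv (congrArg Prod.fst h'')
  · refine ⟨u.1, fun i hi hne hu => funext fun q => ?_⟩
    by_contra hq
    rcases huv _ (hcov i q hi hq) with h'' | h''
    · exact hu (congrArg Prod.fst h'')
    · exact hne (by rw [← h'] at h''; exact congrArg Prod.fst h'')

/-- With two nonzero witnesses in distinct components, these two indices cover everything. -/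
lemma D2_cover₂ {z : Baire}
    (h : ∃ s : Finset (ℕ × ℕ), s.card ≤ 2 ∧ ∀ i j, 1 ≤ i → comp z i j ≠ 0 → (i, j) ∈ s)
    {i₁ q₁ i₂ q₂ : ℕ} (hi₁ : 1 ≤ i₁) (hi₂ : 1 ≤ i₂)
    (hw₁ : comp z i₁ q₁ ≠ 0) (hw₂ : comp z i₂ q₂ ≠ 0) (hne : i₁ ≠ i₂) :
    ∀ i, 1 ≤ i → i ≠ i₁ → i ≠ i₂ → comp z i = zero := by
  obtain ⟨s, hs2, hcov⟩ := h
  obtain ⟨u, v, huv⟩ := exists_two_cover s hs2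
  have m1 := huv _ (hcov i₁ q₁ hi₁ hw₁)
  have m2 := huv _ (hcov i₂ q₂ hi₂ hw₂)
  intro i hi hne1 hne2
  funext q
  by_contra hq
  have m3 := huv _ (hcov i q hi hq)
  have e1 : (i₁, q₁).1 = i₁ := rfl
  rcases m1 with h1 | h1 <;> rcases m2 with h2 | h2 <;> rcases m3 with h3 | h3 <;>
    first
    | exact hne (congrArg Prod.fst (h1.trans h2.symm))
    | exact hne1 (congrArg Prod.fst (h3.trans h1.symm))
    | exact hne2 (congrArg Prod.fst (h3.trans h2.symm))

end Weihrauch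

end Aux

section Core

open Filter Topology

namespace Weihrauch

lemma kconv (k a : ℕ) (hk : 2 ≤ k) (ha : 1 ≤ a) (K : Baire → Baire)
    (hKc : ContinuousOn K (dom (LLPOn k))) (M : ℕ) :
    ∀ᶠ j in atTop, ∀ m < M, K (pert a j) m = K zero m := by
  have hzd := zero_mem_dom k (by omega)
  have hpt : Tendsto (fun j => pert a j) atTop (𝓝 zero) := by
    rw [tendsto_pi_nhds]
    intro m
    refine Tendsto.congr' ?_ tendsto_const_nhds
    exact eventually_atTop.2 ⟨m+1, fun j hj => (pert_lt (by omega)).symm⟩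
  have htw : Tendsto (fun j => pert a j) atTop (𝓝[dom (LLPOn k)] zero) :=
    tendsto_nhdsWithin_of_tendsto_nhds_of_eventually_within _ hpt
      (Eventually.of_forall fun j => pert_mem_dom k a hk ha j)
  have hKt : Tendsto (fun j => K (pert a j)) atTop (𝓝 (K zero)) :=
    Filter.Tendsto.comp (hKc zero hzd) htw
  have hm : ∀ m, ∀ᶠ j in atTop, K (pert a j) m = K zero m := by
    intro m
    have ht := ((continuous_apply m).tendsto (K zero)).comp hKt
    have hs : ({K zero m} : Set ℕ) ∈ 𝓝 (K zero m) := mem_nhds_discrete.mpr rfl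
    have he : ∀ᶠ j in atTop, K (pert a j) m ∈ ({K zero m} : Set ℕ) := ht hs
    exact he.mono fun j hj => hj
  have := (eventually_all_finset (Finset.range M) (l := atTop)
    (p := fun m j => K (pert a j) m = K zero m)).2 (fun m _ => hm m)
  exact this.mono (fun j h m hmM => h m (Finset.mem_range.2 hmM))

/-- Core contradiction: if `cons i zero` solves `K zero` and also solves `K (pert a j)` for
arbitrarily large `j`, where `a` is the outer answer at `pair zero (cons i zero)`, then we
get a contradiction: by continuity `H` keeps answering `a` on `pert a j`, which is invalid. -/
lemma core (k : ℕ) (hk : 2 ≤ k) (H K : Baire → Baire)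
    (hHcont : ContinuousOn H {z | ∃ x ∈ dom (LLPOn k), ∃ y ∈ SigmaLLPO (k+1) (K x), z = pair x y})
    (hHcor : ∀ x ∈ dom (LLPOn k), ∀ y ∈ SigmaLLPO (k+1) (K x), H (pair x y) ∈ LLPOn k x)
    (i a : ℕ) (hi : 1 ≤ i)
    (hy : cons i zero ∈ SigmaLLPO (k+1) (K zero))
    (ha : H (pair zero (cons i zero)) 0 = a)
    (hval : ∃ᶠ j in atTop, cons i zero ∈ SigmaLLPO (k+1) (K (pert a j))) : False := by
  have hzd := zero_mem_dom k (by omega)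
  set S : Set Baire :=
    {z | ∃ x ∈ dom (LLPOn k), ∃ y ∈ SigmaLLPO (k+1) (K x), z = pair x y} with hS
  set y : Baire := cons i zero with hydef
  set z₀ : Baire := pair zero y with hz₀
  have hz₀S : z₀ ∈ S := ⟨zero, hzd, y, hy, rfl⟩
  obtain ⟨-, a', ha'1, ha'k, -, hform⟩ := mem_LLPOn.1 (hHcor zero hzd y hy)
  have haa : a = a' := by rw [← ha, hform]; rfl
  have ha1 : 1 ≤ a := by omega
  -- continuity of the first output coordinate of H at z₀
  have hcw : ContinuousWithinAt H S z₀ := hHcont z₀ hz₀S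
  have ht0 : Tendsto (fun z => H z 0) (𝓝[S] z₀) (𝓝 a) := by
    have := ((continuous_apply 0).tendsto (H z₀)).comp hcw
    rwa [ha] at this
  have hev0 : ∀ᶠ z in 𝓝[S] z₀, H z 0 ∈ ({a} : Set ℕ) := ht0 (mem_nhds_discrete.mpr rfl)
  have hev : ∀ᶠ z in 𝓝[S] z₀, H z 0 = a := hev0.mono fun z hz => hz
  rw [eventually_nhdsWithin_iff] at hev
  -- the perturbed points converge to z₀
  have htt : Tendsto (fun j => pair (pert a j) y) atTop (𝓝 z₀) := by
    rw [tendsto_pi_nhds]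
    intro m
    refine Tendsto.congr' ?_ tendsto_const_nhds
    exact eventually_atTop.2 ⟨m+1, fun j hj => (pert_pair_eq a j y (by omega)).symm⟩
  have hevj : ∀ᶠ j in atTop, (pair (pert a j) y ∈ S → H (pair (pert a j) y) 0 = a) :=
    htt.eventually hev
  obtain ⟨j, hvj, himp⟩ := (hval.and_eventually hevj).exists
  have hpd := pert_mem_dom k a hk ha1 j
  have hzjS : pair (pert a j) y ∈ S := ⟨pert a j, hpd, y, hvj, rfl⟩
  have hval0 : H (pair (pert a j) y) 0 = a := himp hzjS
  obtain ⟨-, b, hb1, hbk, hcb, hfb⟩ := mem_LLPOn.1 (hHcor _ hpd y hvj)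
  have hba : b = a := by rw [← hval0, hfb]; rfl
  have := congrFun hcb j
  rw [hba, comp_pert_self] at this
  exact one_ne_zero this

/-- The outer answer at a valid solution of `K zero` lies in `[1, k]`. -/
lemma Abound (k : ℕ) (hk : 2 ≤ k) (H K : Baire → Baire)
    (hHcor : ∀ x ∈ dom (LLPOn k), ∀ y ∈ SigmaLLPO (k+1) (K x), H (pair x y) ∈ LLPOn k x)
    {i : ℕ} (hy : cons i zero ∈ SigmaLLPO (k+1) (K zero)) :
    1 ≤ H (pair zero (cons i zero)) 0 ∧ H (pair zero (cons i zero)) 0 ≤ k := by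
  obtain ⟨-, a', ha'1, ha'k, -, hform⟩ :=
    mem_LLPOn.1 (hHcor zero (zero_mem_dom k (by omega)) _ hy)
  constructor
  · rw [hform]; exact ha'1
  · rw [hform]; exact ha'k

end Weihrauch

end Core

open Weihrauch Filter Topology

/-- LLPO_{k,1} ≰ᶜ_W Σ_{k+1}^∞ LLPO for every k ≥ 2. -/
theorem LLPOn_not_cWle_SigmaLLPO (k : ℕ) (hk : 2 ≤ k) :
    ¬ CWle (LLPOn k) (SigmaLLPO (k + 1)) := by
  rintro ⟨H, K, hKc, hKd, hHcont, hHcor⟩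
  have hzd := zero_mem_dom k (by omega)
  obtain ⟨r, hr⟩ := hKd zero hzd
  rcases mem_Sigma.1 hr with ⟨hlz, hrinf⟩ | ⟨n, hn, hlz, hrn⟩
  -- ∞-branch at K zero
  · have hD2 := (mem_LLPOinf.1 hrinf).1
    by_cases hw1e : ∃ i₁ q₁, 1 ≤ i₁ ∧ comp (right (K zero)) i₁ q₁ ≠ 0
    · obtain ⟨i₁, q₁, hi₁, hw1⟩ := hw1e
      by_cases hw2e : ∃ i₂ q₂, 1 ≤ i₂ ∧ i₂ ≠ i₁ ∧ comp (right (K zero)) i₂ q₂ ≠ 0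
      -- Case B2 : two distinct nonzero components at K zero
      · obtain ⟨i₂, q₂, hi₂, hne21, hw2⟩ := hw2e
        have hcovz := D2_cover₂ hD2 hi₁ hi₂ hw1 hw2 (fun e => hne21 e.symm)
        have hii : ∃ i, 1 ≤ i ∧ i ≠ i₁ ∧ i ≠ i₂ := by
          by_cases h1 : i₁ ≠ 1 ∧ i₂ ≠ 1
          · exact ⟨1, by omega⟩
          · by_cases h2 : i₁ ≠ 2 ∧ i₂ ≠ 2
            · exact ⟨2, by omega⟩
            · exact ⟨3, by omega⟩
        obtain ⟨i, h1i, hnei₁, hnei₂⟩ := hii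
        have hcz : comp (right (K zero)) i = zero := hcovz i h1i hnei₁ hnei₂
        have hy : cons i zero ∈ SigmaLLPO (k+1) (K zero) :=
          mem_Sigma.2 (Or.inl ⟨hlz, mem_LLPOinf.2 ⟨hD2, i, h1i, hcz, rfl⟩⟩)
        have hab := Abound k hk H K hHcor hy
        set a := H (pair zero (cons i zero)) 0 with hadef
        have hev := kconv k a hk hab.1 K hKc
          (2 * Nat.pair (i₁-1) q₁ + 2 * Nat.pair (i₂-1) q₂ + 2)
        refine core k hk H K hHcont hHcor i a h1i hy rfl ((hev.mono ?_).frequently)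
        intro j hj
        obtain ⟨r', hr'⟩ := hKd _ (pert_mem_dom k a hk hab.1 j)
        have hpers1 : comp (right (K (pert a j))) i₁ q₁ ≠ 0 := by
          rw [comp_right_apply, hj _ (by omega)]; exact hw1
        have hpers2 : comp (right (K (pert a j))) i₂ q₂ ≠ 0 := by
          rw [comp_right_apply, hj _ (by omega)]; exact hw2
        rcases mem_Sigma.1 hr' with ⟨hl0, hrinf'⟩ | ⟨n', hn', hl', hrn'⟩
        · have hD2' := (mem_LLPOinf.1 hrinf').1
          have hcz' := D2_cover₂ hD2' hi₁ hi₂ hpers1 hpers2 (fun e => hne21 e.symm)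
            i h1i hnei₁ hnei₂
          exact mem_Sigma.2 (Or.inl ⟨hl0, mem_LLPOinf.2 ⟨hD2', i, h1i, hcz', rfl⟩⟩)
        · exfalso
          have hpred' := (mem_LLPOn.1 hrn').1
          exact hne21 (hpred' i₁ q₁ i₂ q₂ hi₁ hi₂ hpers1 hpers2).1.symm
      -- Case B1 : exactly one nonzero component index at K zero
      · push_neg at hw2e
        have hyall : ∀ i, 1 ≤ i → i ≠ i₁ → cons i zero ∈ SigmaLLPO (k+1) (K zero) :=
          fun i h1 hne => mem_Sigma.2 (Or.inl ⟨hlz, mem_LLPOinf.2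
            ⟨hD2, i, h1, funext fun q => hw2e i q h1 hne, rfl⟩⟩)
        have hcardT : (Finset.Icc 1 k).card < ((Finset.Icc 1 (k+2)).erase i₁).card := by
          have h1 : (Finset.Icc 1 (k+2)).card = k+2 := by rw [Nat.card_Icc]; omega
          have h2 := Finset.pred_card_le_card_erase
            (s := Finset.Icc 1 (k+2)) (a := i₁)
          have h3 : (Finset.Icc 1 k).card = k := by rw [Nat.card_Icc]; omega
          omega
        have hmap : ∀ i ∈ (Finset.Icc 1 (k+2)).erase i₁,
            H (pair zero (cons i zero)) 0 ∈ Finset.Icc 1 k := by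
          intro i hiT
          have h1 : 1 ≤ i := (Finset.mem_Icc.1 (Finset.mem_of_mem_erase hiT)).1
          have hne : i ≠ i₁ := (Finset.mem_erase.1 hiT).1
          exact Finset.mem_Icc.2 (Abound k hk H K hHcor (hyall i h1 hne))
        obtain ⟨i, hiT, i', hi'T, hne', hAA⟩ :=
          Finset.exists_ne_map_eq_of_card_lt_of_maps_to hcardT hmap
        have h1i : 1 ≤ i := (Finset.mem_Icc.1 (Finset.mem_of_mem_erase hiT)).1
        have hik : i ≤ k+2 := (Finset.mem_Icc.1 (Finset.mem_of_mem_erase hiT)).2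
        have hnei₁ : i ≠ i₁ := (Finset.mem_erase.1 hiT).1
        have h1i' : 1 ≤ i' := (Finset.mem_Icc.1 (Finset.mem_of_mem_erase hi'T)).1
        have hi'k : i' ≤ k+2 := (Finset.mem_Icc.1 (Finset.mem_of_mem_erase hi'T)).2
        have hnei₁' : i' ≠ i₁ := (Finset.mem_erase.1 hi'T).1
        have hy := hyall i h1i hnei₁
        have hy' := hyall i' h1i' hnei₁'
        have hab := Abound k hk H K hHcor hy
        set a := H (pair zero (cons i zero)) 0 with hadef
        have hev := kconv k a hk hab.1 K hKc
          (2 * Nat.pair (i₁-1) q₁ + 2*(k+3) + 2)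
        have hevv : ∀ᶠ j in atTop, (cons i zero ∈ SigmaLLPO (k+1) (K (pert a j)) ∨
            cons i' zero ∈ SigmaLLPO (k+1) (K (pert a j))) := by
          refine hev.mono ?_
          intro j hj
          obtain ⟨r', hr'⟩ := hKd _ (pert_mem_dom k a hk hab.1 j)
          have hpers1 : comp (right (K (pert a j))) i₁ q₁ ≠ 0 := by
            rw [comp_right_apply, hj _ (by omega)]; exact hw1
          rcases mem_Sigma.1 hr' with ⟨hl0, hrinf'⟩ | ⟨n', hn', hl', hrn'⟩
          · have hD2' := (mem_LLPOinf.1 hrinf').1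
            obtain ⟨u, hcov⟩ := D2_cover₁ hD2' hi₁ hpers1
            rcases (by omega : i ≠ u ∨ i' ≠ u) with h | h
            · exact Or.inl (mem_Sigma.2 (Or.inl ⟨hl0, mem_LLPOinf.2
                ⟨hD2', i, h1i, hcov i h1i hnei₁ h, rfl⟩⟩))
            · exact Or.inr (mem_Sigma.2 (Or.inl ⟨hl0, mem_LLPOinf.2
                ⟨hD2', i', h1i', hcov i' h1i' hnei₁' h, rfl⟩⟩))
          · have hpred' := (mem_LLPOn.1 hrn').1
            have hn'big : k+3 ≤ n' := by
              by_contra hc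
              push_neg at hc
              have h2 : left (K (pert a j)) n' = zero n' := by
                rw [left_apply, hj _ (by omega)]
                exact congrFun hlz n'
              rw [hl'] at h2
              unfold zeros1 zero at h2
              rw [if_pos rfl] at h2
              exact absurd h2 (by omega)
            have hci : comp (right (K (pert a j))) i = zero :=
              D1_other hpred' hi₁ hpers1 h1i hnei₁
            exact Or.inl (mem_Sigma.2 (Or.inr ⟨n', hn', hl', mem_LLPOn.2
              ⟨hpred', i, h1i, by omega, hci, rfl⟩⟩))
        rcases frequently_or_distrib.1 hevv.frequently with hf | hf
        · exact core k hk H K hHcont hHcor i a h1i hy rfl hf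
        · exact core k hk H K hHcont hHcor i' a h1i' hy' hAA.symm hf
    -- Case B0 : all components of K zero are zero
    · push_neg at hw1e
      have hyall : ∀ i, 1 ≤ i → cons i zero ∈ SigmaLLPO (k+1) (K zero) :=
        fun i h1 => mem_Sigma.2 (Or.inl ⟨hlz, mem_LLPOinf.2
          ⟨hD2, i, h1, funext fun q => hw1e i q h1, rfl⟩⟩)
      have hmap : ∀ i ∈ Finset.Icc 1 (2*k+1),
          H (pair zero (cons i zero)) 0 ∈ Finset.Icc 1 k := by
        intro i hiT
        have h1 : 1 ≤ i := (Finset.mem_Icc.1 hiT).1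
        exact Finset.mem_Icc.2 (Abound k hk H K hHcor (hyall i h1))
      obtain ⟨a, haI, hfib⟩ := Finset.exists_lt_card_fiber_of_mul_lt_card_of_maps_to (n := 2) hmap
        (by rw [Nat.card_Icc, Nat.card_Icc]; omega)
      obtain ⟨i, i', i'', hiF, hi'F, hi''F, hne1, hne2, hne3⟩ := Finset.two_lt_card_iff.1 hfib
      have hiI := Finset.mem_filter.1 hiF
      have hi'I := Finset.mem_filter.1 hi'F
      have hi''I := Finset.mem_filter.1 hi''F
      have h1i : 1 ≤ i := (Finset.mem_Icc.1 hiI.1).1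
      have h1i' : 1 ≤ i' := (Finset.mem_Icc.1 hi'I.1).1
      have h1i'' : 1 ≤ i'' := (Finset.mem_Icc.1 hi''I.1).1
      have hik : i ≤ 2*k+1 := (Finset.mem_Icc.1 hiI.1).2
      have hi'k : i' ≤ 2*k+1 := (Finset.mem_Icc.1 hi'I.1).2
      have hi''k : i'' ≤ 2*k+1 := (Finset.mem_Icc.1 hi''I.1).2
      have ha1 : 1 ≤ a := (Finset.mem_Icc.1 haI).1
      have hy := hyall i h1i
      have hy' := hyall i' h1i'
      have hy'' := hyall i'' h1i''
      have hev := kconv k a hk ha1 K hKc (2*(2*k+2))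
      have hevv : ∀ᶠ j in atTop, (cons i zero ∈ SigmaLLPO (k+1) (K (pert a j)) ∨
          cons i' zero ∈ SigmaLLPO (k+1) (K (pert a j)) ∨
          cons i'' zero ∈ SigmaLLPO (k+1) (K (pert a j))) := by
        refine hev.mono ?_
        intro j hj
        obtain ⟨r', hr'⟩ := hKd _ (pert_mem_dom k a hk ha1 j)
        rcases mem_Sigma.1 hr' with ⟨hl0, hrinf'⟩ | ⟨n', hn', hl', hrn'⟩
        · have hD2' := (mem_LLPOinf.1 hrinf').1
          obtain ⟨u, v, hcov⟩ := D2_cover hD2'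
          rcases (by omega : (i ≠ u ∧ i ≠ v) ∨ (i' ≠ u ∧ i' ≠ v) ∨ (i'' ≠ u ∧ i'' ≠ v))
            with h | h | h
          · exact Or.inl (mem_Sigma.2 (Or.inl ⟨hl0, mem_LLPOinf.2
              ⟨hD2', i, h1i, hcov i h1i h.1 h.2, rfl⟩⟩))
          · exact Or.inr (Or.inl (mem_Sigma.2 (Or.inl ⟨hl0, mem_LLPOinf.2
              ⟨hD2', i', h1i', hcov i' h1i' h.1 h.2, rfl⟩⟩)))
          · exact Or.inr (Or.inr (mem_Sigma.2 (Or.inl ⟨hl0, mem_LLPOinf.2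
              ⟨hD2', i'', h1i'', hcov i'' h1i'' h.1 h.2, rfl⟩⟩)))
        · have hpred' := (mem_LLPOn.1 hrn').1
          have hn'big : 2*k+2 ≤ n' := by
            by_contra hc
            push_neg at hc
            have h2 : left (K (pert a j)) n' = zero n' := by
              rw [left_apply, hj _ (by omega)]
              exact congrFun hlz n'
            rw [hl'] at h2
            unfold zeros1 zero at h2
            rw [if_pos rfl] at h2
            exact absurd h2 (by omega)
          obtain ⟨u, hcov⟩ := D1_cover hpred'
          rcases (by omega : i ≠ u ∨ i' ≠ u ∨ i'' ≠ u) with h | h | h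
          · exact Or.inl (mem_Sigma.2 (Or.inr ⟨n', hn', hl', mem_LLPOn.2
              ⟨hpred', i, h1i, by omega, hcov i h1i h, rfl⟩⟩))
          · exact Or.inr (Or.inl (mem_Sigma.2 (Or.inr ⟨n', hn', hl', mem_LLPOn.2
              ⟨hpred', i', h1i', by omega, hcov i' h1i' h, rfl⟩⟩)))
          · exact Or.inr (Or.inr (mem_Sigma.2 (Or.inr ⟨n', hn', hl', mem_LLPOn.2
              ⟨hpred', i'', h1i'', by omega, hcov i'' h1i'' h, rfl⟩⟩)))
      rcases frequently_or_distrib.1 hevv.frequently with hf | hf'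
      · exact core k hk H K hHcont hHcor i a h1i hy hiI.2 hf
      · rcases frequently_or_distrib.1 hf' with hf | hf
        · exact core k hk H K hHcont hHcor i' a h1i' hy' hi'I.2 hf
        · exact core k hk H K hHcont hHcor i'' a h1i'' hy'' hi''I.2 hf
  -- finite branch at K zero : left (K zero) = zeros1 n, k+1 ≤ n
  · have hpred := (mem_LLPOn.1 hrn).1
    by_cases hw1e : ∃ i₁ q₁, 1 ≤ i₁ ∧ comp (right (K zero)) i₁ q₁ ≠ 0
    -- Case A1 : one nonzero component at K zero
    · obtain ⟨i₁, q₁, hi₁, hw1⟩ := hw1e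
      have hii : ∃ i, 1 ≤ i ∧ i ≠ i₁ ∧ i ≤ n := by
        by_cases h1 : i₁ = 1
        · exact ⟨2, by omega⟩
        · exact ⟨1, by omega⟩
      obtain ⟨i, h1i, hnei₁, hin⟩ := hii
      have hcz := D1_other hpred hi₁ hw1 h1i hnei₁
      have hy : cons i zero ∈ SigmaLLPO (k+1) (K zero) :=
        mem_Sigma.2 (Or.inr ⟨n, hn, hlz, mem_LLPOn.2 ⟨hpred, i, h1i, hin, hcz, rfl⟩⟩)
      have hab := Abound k hk H K hHcor hy
      set a := H (pair zero (cons i zero)) 0 with hadef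
      have hev := kconv k a hk hab.1 K hKc (2*n + 2 * Nat.pair (i₁-1) q₁ + 2)
      refine core k hk H K hHcont hHcor i a h1i hy rfl ((hev.mono ?_).frequently)
      intro j hj
      obtain ⟨r', hr'⟩ := hKd _ (pert_mem_dom k a hk hab.1 j)
      have hlw : left (K (pert a j)) n = zeros1 n n := by
        rw [left_apply, hj _ (by omega)]
        exact congrFun hlz n
      rcases mem_Sigma.1 hr' with ⟨hl0, -⟩ | ⟨n', hn', hl', hrn'⟩
      · exfalso
        rw [hl0] at hlw
        unfold zeros1 zero at hlw
        rw [if_pos rfl] at hlw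
        exact absurd hlw (by omega)
      · have hnn : n' = n := by
          by_contra hc
          rw [hl'] at hlw
          unfold zeros1 at hlw
          rw [if_pos rfl, if_neg (fun e => hc e.symm)] at hlw
          exact absurd hlw (by omega)
        rw [hnn] at hn' hl' hrn'
        have hpred' := (mem_LLPOn.1 hrn').1
        have hpers : comp (right (K (pert a j))) i₁ q₁ ≠ 0 := by
          rw [comp_right_apply, hj _ (by omega)]; exact hw1
        have hcz' := D1_other hpred' hi₁ hpers h1i hnei₁
        exact mem_Sigma.2 (Or.inr ⟨n, hn', hl', mem_LLPOn.2 ⟨hpred', i, h1i, hin, hcz', rfl⟩⟩)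
    -- Case A0 : all components of K zero are zero
    · push_neg at hw1e
      have hyall : ∀ i, 1 ≤ i → i ≤ n → cons i zero ∈ SigmaLLPO (k+1) (K zero) :=
        fun i h1 h2 => mem_Sigma.2 (Or.inr ⟨n, hn, hlz, mem_LLPOn.2
          ⟨hpred, i, h1, h2, funext fun q => hw1e i q h1, rfl⟩⟩)
      have hmap : ∀ i ∈ Finset.Icc 1 n,
          H (pair zero (cons i zero)) 0 ∈ Finset.Icc 1 k := by
        intro i hiT
        have h1 := Finset.mem_Icc.1 hiT
        exact Finset.mem_Icc.2 (Abound k hk H K hHcor (hyall i h1.1 h1.2))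
      obtain ⟨i, hiT, i', hi'T, hne', hAA⟩ :=
        Finset.exists_ne_map_eq_of_card_lt_of_maps_to
          (by rw [Nat.card_Icc, Nat.card_Icc]; omega) hmap
      have h1i : 1 ≤ i := (Finset.mem_Icc.1 hiT).1
      have hin : i ≤ n := (Finset.mem_Icc.1 hiT).2
      have h1i' : 1 ≤ i' := (Finset.mem_Icc.1 hi'T).1
      have hi'n : i' ≤ n := (Finset.mem_Icc.1 hi'T).2
      have hy := hyall i h1i hin
      have hy' := hyall i' h1i' hi'n
      have hab := Abound k hk H K hHcor hy
      set a := H (pair zero (cons i zero)) 0 with hadef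
      have hev := kconv k a hk hab.1 K hKc (2*n + 2)
      have hevv : ∀ᶠ j in atTop, (cons i zero ∈ SigmaLLPO (k+1) (K (pert a j)) ∨
          cons i' zero ∈ SigmaLLPO (k+1) (K (pert a j))) := by
        refine hev.mono ?_
        intro j hj
        obtain ⟨r', hr'⟩ := hKd _ (pert_mem_dom k a hk hab.1 j)
        have hlw : left (K (pert a j)) n = zeros1 n n := by
          rw [left_apply, hj _ (by omega)]
          exact congrFun hlz n
        rcases mem_Sigma.1 hr' with ⟨hl0, -⟩ | ⟨n', hn', hl', hrn'⟩
        · exfalso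
          rw [hl0] at hlw
          unfold zeros1 zero at hlw
          rw [if_pos rfl] at hlw
          exact absurd hlw (by omega)
        · have hnn : n' = n := by
            by_contra hc
            rw [hl'] at hlw
            unfold zeros1 at hlw
            rw [if_pos rfl, if_neg (fun e => hc e.symm)] at hlw
            exact absurd hlw (by omega)
          rw [hnn] at hn' hl' hrn'
          have hpred' := (mem_LLPOn.1 hrn').1
          by_cases hcc : comp (right (K (pert a j))) i = zero
          · exact Or.inl (mem_Sigma.2 (Or.inr ⟨n, hn', hl', mem_LLPOn.2
              ⟨hpred', i, h1i, hin, hcc, rfl⟩⟩))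
          · obtain ⟨q, hq⟩ := Function.ne_iff.1 hcc
            have hcz' := D1_other hpred' h1i hq h1i' (fun e => hne' e.symm)
            exact Or.inr (mem_Sigma.2 (Or.inr ⟨n, hn', hl', mem_LLPOn.2
              ⟨hpred', i', h1i', hi'n, hcz', rfl⟩⟩))
      rcases frequently_or_distrib.1 hevv.frequently with hf | hf
      · exact core k hk H K hHcont hHcor i a h1i hy rfl hf
      · exact core k hk H K hHcont hHcor i' a h1i' hy' hAA.symm hf
end

section
/- For every k ≥ 2, Σ_2^∞LLPO ≤ᶜ_W (Σ_k^∞LLPO) ∐ LLPO_{2,1}. -/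
open Weihrauch


namespace SigmaAux

open Weihrauch

/-- Merge components 2..n of `p` into one sequence. -/
def mergeB (n : ℕ) (p : Baire) : Baire := ftup (n - 1) (fun i => comp p (i + 2))

/-- Input for LLPO_{2,1}: first component of `p`, and the merge of the rest. -/
def Qf (n : ℕ) (p : Baire) : Baire :=
  ctup (fun i => if i = 0 then comp p 1 else if i = 1 then mergeB n p else zero)

lemma cproj_ctup (g : ℕ → Baire) (i : ℕ) : cproj i (ctup g) = g i := by
  funext j; simp [cproj, ctup, Nat.unpair_pair]

lemma comp_ctup (g : ℕ → Baire) (i : ℕ) : comp (ctup g) i = g (i - 1) :=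
  cproj_ctup g (i - 1)

lemma right_pair (p q : Baire) : right (pair p q) = q := by
  funext n
  show (if (2 * n + 1) % 2 = 0 then p ((2 * n + 1) / 2) else q ((2 * n + 1) / 2)) = q n
  rw [if_neg (by omega)]
  congr 1; omega

lemma tail_cons (b : ℕ) (s : Baire) : tail (cons b s) = s := rfl

lemma comp_Qf_one (n : ℕ) (p : Baire) : comp (Qf n p) 1 = comp p 1 := by
  rw [Qf, comp_ctup]; norm_num

lemma comp_Qf_two (n : ℕ) (p : Baire) : comp (Qf n p) 2 = mergeB n p := by
  rw [Qf, comp_ctup]; norm_num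

lemma comp_Qf_ge (n i : ℕ) (hi : 3 ≤ i) (p : Baire) : comp (Qf n p) i = zero := by
  rw [Qf, comp_ctup, if_neg (by omega), if_neg (by omega)]

lemma mergeB_apply (n : ℕ) (p : Baire) (m : ℕ) :
    mergeB n p m = comp p (m % (n - 1) + 2) (m / (n - 1)) := rfl

/-- The at-most-one-nonzero-pair condition. -/
def D (p : Baire) : Prop :=
  ∀ i j i' j', 1 ≤ i → 1 ≤ i' → comp p i j ≠ 0 → comp p i' j' ≠ 0 → i = i' ∧ j = j'

lemma D_Qf {n : ℕ} (hn : 2 ≤ n) {p : Baire} (hD : D p) : D (Qf n p) := by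
  intro i j i' j' hi hi' h h'
  have hle : i ≤ 2 := by
    by_contra hgt
    rw [comp_Qf_ge n i (by omega)] at h; exact h rfl
  have hle' : i' ≤ 2 := by
    by_contra hgt
    rw [comp_Qf_ge n i' (by omega)] at h'; exact h' rfl
  interval_cases i <;> interval_cases i'
  · rw [comp_Qf_one] at h h'
    exact hD 1 j 1 j' le_rfl le_rfl h h'
  · rw [comp_Qf_one] at h
    rw [comp_Qf_two, mergeB_apply] at h'
    have := hD 1 j (j' % (n - 1) + 2) (j' / (n - 1)) le_rfl (by omega) h h'
    omega
  · rw [comp_Qf_one] at h'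
    rw [comp_Qf_two, mergeB_apply] at h
    have := hD (j % (n - 1) + 2) (j / (n - 1)) 1 j' (by omega) le_rfl h h'
    omega
  · rw [comp_Qf_two, mergeB_apply] at h h'
    have hq := hD (j % (n - 1) + 2) (j / (n - 1)) (j' % (n - 1) + 2) (j' / (n - 1))
      (by omega) (by omega) h h'
    refine ⟨rfl, ?_⟩
    have h1 := Nat.div_add_mod j (n - 1)
    have h2 := Nat.div_add_mod j' (n - 1)
    have e1 : j % (n - 1) = j' % (n - 1) := by omega
    rw [hq.2, e1] at h1
    exact h1.symm.trans h2

lemma comp_two_of_mergeB_zero {n : ℕ} (hn : 2 ≤ n) {p : Baire}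
    (h : mergeB n p = zero) : comp p 2 = zero := by
  funext j
  have hm := congrFun h (j * (n - 1))
  rw [mergeB_apply, Nat.mul_mod_left, Nat.mul_div_cancel _ (by omega : 0 < n - 1)] at hm
  exact hm

lemma mergeB_zero_of {p : Baire} (hD : D p) {j₀ : ℕ} (h1 : comp p 1 j₀ ≠ 0) (n : ℕ) :
    mergeB n p = zero := by
  funext m
  by_contra h
  rw [mergeB_apply] at h
  have := hD 1 j₀ (m % (n - 1) + 2) (m / (n - 1)) le_rfl (by omega) h1 h
  omega

/-- The finite data governing the branch. -/
def Fv (k : ℕ) (x : Baire) : Fin k → ℕ := fun i => x (2 * (i : ℕ))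

noncomputable def Gfun (k : ℕ) (v : Fin k → ℕ) : Baire → Baire := fun x =>
  if h : ∃ n : Fin k, 2 ≤ (n : ℕ) ∧ v n = 1
  then cons 1 (Qf ((h.choose : Fin k) : ℕ) (right x))
  else cons 0 x

noncomputable def Kfun (k : ℕ) : Baire → Baire := fun x => Gfun k (Fv k x) x

lemma zeros1_self (n : ℕ) : zeros1 n n = 1 := by simp [zeros1]

lemma zeros1_ne {n m : ℕ} (h : m ≠ n) : zeros1 n m = 0 := by simp [zeros1, h]

lemma Kfun_eq_branch1 {k n : ℕ} {x : Baire} (hx : left x = zeros1 n)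
    (hn2 : 2 ≤ n) (hnk : n < k) : Kfun k x = cons 1 (Qf n (right x)) := by
  have hcond : ∃ m : Fin k, 2 ≤ (m : ℕ) ∧ Fv k x m = 1 := by
    refine ⟨⟨n, hnk⟩, hn2, ?_⟩
    have : left x n = zeros1 n n := congrFun hx n
    rw [zeros1_self] at this
    exact this
  rw [Kfun, Gfun, dif_pos hcond]
  have hc := hcond.choose_spec
  have hch : ((hcond.choose : Fin k) : ℕ) = n := by
    by_contra hne
    have : left x (hcond.choose : ℕ) = zeros1 n (hcond.choose : ℕ) :=
      congrFun hx _
    rw [zeros1_ne hne] at this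
    have := hc.2
    rw [show Fv k x hcond.choose = left x (hcond.choose : ℕ) from rfl] at this
    omega
  rw [hch]

lemma Kfun_eq_branch0_zero {k : ℕ} {x : Baire} (hx : left x = zero) :
    Kfun k x = cons 0 x := by
  have hcond : ¬ ∃ m : Fin k, 2 ≤ (m : ℕ) ∧ Fv k x m = 1 := by
    rintro ⟨m, -, hm⟩
    have : left x (m : ℕ) = zero (m : ℕ) := congrFun hx _
    rw [show Fv k x m = left x (m : ℕ) from rfl] at hm
    rw [hm] at this
    exact one_ne_zero this
  rw [Kfun, Gfun, dif_neg hcond]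

lemma Kfun_eq_branch0_big {k n : ℕ} {x : Baire} (hx : left x = zeros1 n)
    (hkn : k ≤ n) : Kfun k x = cons 0 x := by
  have hcond : ¬ ∃ m : Fin k, 2 ≤ (m : ℕ) ∧ Fv k x m = 1 := by
    rintro ⟨m, -, hm⟩
    have hne : (m : ℕ) ≠ n := by have := m.2; omega
    have : left x (m : ℕ) = zeros1 n (m : ℕ) := congrFun hx _
    rw [zeros1_ne hne] at this
    rw [show Fv k x m = left x (m : ℕ) from rfl] at hm
    omega
  rw [Kfun, Gfun, dif_neg hcond]

lemma cont_cons (b : ℕ) {f : Baire → Baire} (hf : Continuous f) :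
    Continuous fun x => cons b (f x) := by
  apply continuous_pi; intro m
  match m with
  | 0 => exact continuous_const
  | (m + 1) =>
    show Continuous fun x => f x m
    exact (continuous_apply m).comp hf

lemma cont_right : Continuous (right : Baire → Baire) :=
  continuous_pi fun n => continuous_apply _

lemma cont_Qf (n : ℕ) : Continuous (Qf n) := by
  apply continuous_pi; intro m
  show Continuous fun p =>
    (if (Nat.unpair m).1 = 0 then comp p 1
     else if (Nat.unpair m).1 = 1 then mergeB n p else zero) (Nat.unpair m).2
  split_ifs with h1 h2
  · exact continuous_apply _
  · exact continuous_apply _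
  · exact continuous_const

lemma cont_Gfun (k : ℕ) (v : Fin k → ℕ) : Continuous (Gfun k v) := by
  unfold Gfun
  split_ifs with h
  · exact cont_cons 1 ((cont_Qf _).comp cont_right)
  · exact cont_cons 0 continuous_id

lemma cont_Kfun (k : ℕ) : Continuous (Kfun k) := by
  rw [continuous_iff_continuousAt]
  intro x
  have hF : Continuous (Fv k) := continuous_pi fun i => continuous_apply _
  have hmem : (Fv k) ⁻¹' {Fv k x} ∈ nhds x :=
    hF.continuousAt.preimage_mem_nhds ((isOpen_discrete _).mem_nhds rfl)
  refine ((cont_Gfun k (Fv k x)).continuousAt).congr ?_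
  filter_upwards [hmem] with y hy
  have : Fv k y = Fv k x := hy
  rw [Kfun, this]

end SigmaAux

open SigmaAux in
/-- Σ_2^∞LLPO ≤ᶜ_W (Σ_k^∞LLPO) ∐ LLPO_{2,1} for every k ≥ 2. -/
theorem SigmaLLPO_cWle_coprod (k : ℕ) (hk : 2 ≤ k) :
    CWle (SigmaLLPO 2) (coprod (SigmaLLPO k) (LLPOn 2)) := by
  refine ⟨fun w => tail (right w), Kfun k, (cont_Kfun k).continuousOn, ?_, ?_, ?_⟩
  · -- K maps dom into dom
    rintro x ⟨r, hr⟩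
    rcases hr with ⟨hxl, hri⟩ | ⟨n, hn2, hxl, hrn⟩
    · rw [Kfun_eq_branch0_zero hxl]
      exact ⟨cons 0 r, Or.inl ⟨rfl, r, Or.inl ⟨hxl, hri⟩, rfl⟩⟩
    · rcases le_or_gt k n with hkn | hnk
      · rw [Kfun_eq_branch0_big hxl hkn]
        exact ⟨cons 0 r, Or.inl ⟨rfl, r, Or.inr ⟨n, hkn, hxl, hrn⟩, rfl⟩⟩
      · rw [Kfun_eq_branch1 hxl hn2 hnk]
        set p := right x with hp
        by_cases h1 : comp p 1 = zero
        · refine ⟨cons 1 (cons 1 zero), Or.inr ⟨rfl, cons 1 zero,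
            ⟨D_Qf hn2 hrn.1, 1, le_rfl, one_le_two, ?_, rfl⟩, rfl⟩⟩
          rw [tail_cons, comp_Qf_one]; exact h1
        · obtain ⟨j₀, hj₀⟩ := Function.ne_iff.mp h1
          refine ⟨cons 1 (cons 2 zero), Or.inr ⟨rfl, cons 2 zero,
            ⟨D_Qf hn2 hrn.1, 2, one_le_two, le_rfl, ?_, rfl⟩, rfl⟩⟩
          rw [tail_cons, comp_Qf_two]
          exact mergeB_zero_of hrn.1 hj₀ n
  · -- continuity of H
    exact (continuous_pi fun n =>
      continuous_apply (2 * (n + 1) + 1)).continuousOn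
  · -- correctness
    rintro x ⟨r, hr⟩ y hy
    show tail (right (pair x y)) ∈ SigmaLLPO 2 x
    rw [right_pair]
    rcases hr with ⟨hxl, -⟩ | ⟨n, hn2, hxl, hrn⟩
    · rw [Kfun_eq_branch0_zero hxl] at hy
      rcases hy with ⟨-, s, hs, rfl⟩ | ⟨h1, -⟩
      · rw [tail_cons] at hs ⊢
        rcases hs with ⟨-, hsi⟩ | ⟨m, -, hxm, -⟩
        · exact Or.inl ⟨hxl, hsi⟩
        · have hcontr := congrFun (hxl.symm.trans hxm) m
          simp [zero, zeros1] at hcontr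
      · exact absurd h1 Nat.zero_ne_one
    · rcases le_or_gt k n with hkn | hnk
      · rw [Kfun_eq_branch0_big hxl hkn] at hy
        rcases hy with ⟨-, s, hs, rfl⟩ | ⟨h1, -⟩
        · rw [tail_cons] at hs ⊢
          rcases hs with ⟨hl, -⟩ | ⟨m, -, hxm, hsm⟩
          · have hcontr := congrFun (hxl.symm.trans hl) n
            simp [zero, zeros1] at hcontr
          · have heq := congrFun (hxl.symm.trans hxm) n
            rw [zeros1_self] at heq
            have hnm : n = m := by
              by_contra h
              rw [zeros1_ne h] at heq
              omega
            subst hnm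
            exact Or.inr ⟨n, hn2, hxl, hsm⟩
        · exact absurd h1 Nat.zero_ne_one
      · rw [Kfun_eq_branch1 hxl hn2 hnk] at hy
        rcases hy with ⟨h0, -⟩ | ⟨-, s, hs, rfl⟩
        · exact absurd h0 Nat.one_ne_zero
        · rw [tail_cons] at hs ⊢
          obtain ⟨-, i, hi1, hi2, hci, rfl⟩ := hs
          refine Or.inr ⟨n, hn2, hxl, hrn.1, i, hi1, hi2.trans hn2, ?_, rfl⟩
          interval_cases i
          · rw [comp_Qf_one] at hci; exact hci
          · rw [comp_Qf_two] at hci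
            exact comp_two_of_mergeB_zero hn2 hci
end
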